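/- Let k ≥ 2 be an integer, A a k-mixing F-algebra, and S a generating set of A. If w is an irreducible word in S with l(w) ≥ature 2, then there exist irreducible k-bounded words w_1, …, w_n in S with l(w_i) ≤ l(w) for all i such that w lies in the F-linear span of w_1, …, w_n. -/

import Mathlib

namespace P

/-- The list of leaves (letters) of a nonassociative word, in order. -/
def leafList {α : Type*} : FreeMagma α → List α
  | .of a => [a]
  | .mul x y => leafList x ++ leafList y

/-- The length of a nonassociative word: the number of factors. -/
def wlen {α : Type*} (w : FreeMagma α) : ℕ := (leafList w).length

/-- Evaluation of a formal word with letters in a magma `A`. -/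
def evalA {A : Type*} [Mul A] (w : FreeMagma A) : A :=
  FreeMagma.lift (id : A → A) w

/-- Evaluation of a formal word in variables `Fin n` under an assignment `v`. -/
def evalVar {A : Type*} [Mul A] {n : ℕ} (v : Fin n → A) (w : FreeMagma (Fin n)) : A :=
  FreeMagma.lift v w

/-- `w` is a word in the set `S`: all its letters belong to `S`. -/
def HasLeavesIn {A : Type*} (S : Set A) (w : FreeMagma A) : Prop :=
  ∀ a ∈ leafList w, a ∈ S

/-- `L_i(S)`: the span of all values of words in `S` of length at most `i`.
For `i = 0` this is `0`, since every word has length at least 1. -/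
def Lspan (F : Type*) {A : Type*} [Field F] [NonUnitalNonAssocRing A] [Module F A]
    (S : Set A) (i : ℕ) : Submodule F A :=
  Submodule.span F { a | ∃ w : FreeMagma A, HasLeavesIn S w ∧ wlen w ≤ i ∧ evalA w = a }

/-- `S` is a generating set of the algebra `A`. -/
def Generates (F : Type*) {A : Type*} [Field F] [NonUnitalNonAssocRing A] [Module F A]
    (S : Set A) : Prop :=
  Submodule.span F { a | ∃ w : FreeMagma A, HasLeavesIn S w ∧ evalA w = a } = ⊤

/-- The length `l(S)` of a generating set: the least `k` with `L_k(S) = A`. -/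
noncomputable def lenS (F : Type*) {A : Type*} [Field F] [NonUnitalNonAssocRing A] [Module F A]
    (S : Set A) : ℕ :=
  sInf { k | Lspan F S k = ⊤ }

/-- The characteristic sequence of a generating set `S`, as a predicate on a
nondecreasing sequence `m : Fin d → ℕ`. -/
def IsCharSeq (F : Type*) {A : Type*} [Field F] [NonUnitalNonAssocRing A] [Module F A]
    (S : Set A) {d : ℕ} (m : Fin d → ℕ) : Prop :=
  Monotone m ∧ (∀ j, 1 ≤ m j) ∧
    ∀ t : ℕ, 1 ≤ t →
      (Finset.univ.filter fun j => m j = t).card =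
        Module.finrank F (Lspan F S t) - Module.finrank F (Lspan F S (t - 1))

/-- `w` is a multilinear word using each variable of `T` exactly once. -/
def IsMultilinearOn {n : ℕ} (T : Finset (Fin n)) (w : FreeMagma (Fin n)) : Prop :=
  (leafList w : Multiset (Fin n)) = T.val

/-- Membership in `D_0(z_0,…,z_k)`: multilinear words in `z_0,…,z_k` except those of
length `k+1` in which `z_0` is a factor of the last multiplication. -/
def InD0 {k : ℕ} (w : FreeMagma (Fin (k + 1))) : Prop :=
  (leafList w : Multiset (Fin (k + 1))).Nodup ∧
    ¬∃ u : FreeMagma (Fin (k + 1)),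
        IsMultilinearOn (Finset.univ.erase 0) u ∧
          (w = FreeMagma.of 0 * u ∨ w = u * FreeMagma.of 0)

/-- Membership in `D_l(z_0,…,z_k)`: multilinear words in `z_0,…,z_k` except those of
length `k+1` in which `z_0` occurs in the first factor of the last multiplication. -/
def InDl {k : ℕ} (w : FreeMagma (Fin (k + 1))) : Prop :=
  (leafList w : Multiset (Fin (k + 1))).Nodup ∧
    ¬((leafList w : Multiset (Fin (k + 1))) = (Finset.univ : Finset (Fin (k + 1))).val ∧
      ∃ w1 w2 : FreeMagma (Fin (k + 1)), w = w1 * w2 ∧ (0 : Fin (k + 1)) ∈ leafList w1)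

/-- Membership in `D_r(z_0,…,z_k)`: multilinear words in `z_0,…,z_k` except those of
length `k+1` in which `z_0` occurs in the second factor of the last multiplication. -/
def InDr {k : ℕ} (w : FreeMagma (Fin (k + 1))) : Prop :=
  (leafList w : Multiset (Fin (k + 1))).Nodup ∧
    ¬((leafList w : Multiset (Fin (k + 1))) = (Finset.univ : Finset (Fin (k + 1))).val ∧
      ∃ w1 w2 : FreeMagma (Fin (k + 1)), w = w1 * w2 ∧ (0 : Fin (k + 1)) ∈ leafList w2)

/-- The algebra `A` is `k`-mixing. -/
def IsKMixing (F A : Type*) [Field F] [NonUnitalNonAssocRing A] [Module F A] (k : ℕ) : Prop :=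
  ∀ (x : A) (y : Fin k → A) (w : FreeMagma (Fin (k + 1))),
    (∃ u, IsMultilinearOn (Finset.univ.erase 0) u ∧
        (w = FreeMagma.of 0 * u ∨ w = u * FreeMagma.of 0)) →
      evalVar (Fin.cons x y) w ∈
        Submodule.span F
          { a | ∃ z : FreeMagma (Fin (k + 1)), InD0 z ∧ evalVar (Fin.cons x y) z = a }

/-- The algebra `A` is `k`-sliding. -/
def IsKSliding (F A : Type*) [Field F] [NonUnitalNonAssocRing A] [Module F A] (k : ℕ) : Prop :=
  (∀ (x : A) (y : Fin k → A) (u : FreeMagma (Fin (k + 1))),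
      IsMultilinearOn (Finset.univ.erase 0) u →
        evalVar (Fin.cons x y) (u * FreeMagma.of 0) ∈
          Submodule.span F
            { a | ∃ z : FreeMagma (Fin (k + 1)), InDl z ∧ evalVar (Fin.cons x y) z = a }) ∨
  (∀ (x : A) (y : Fin k → A) (u : FreeMagma (Fin (k + 1))),
      IsMultilinearOn (Finset.univ.erase 0) u →
        evalVar (Fin.cons x y) (FreeMagma.of 0 * u) ∈
          Submodule.span F
            { a | ∃ z : FreeMagma (Fin (k + 1)), InDr z ∧ evalVar (Fin.cons x y) z = a })

/-- `u` is a subword of `w`. -/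
inductive IsSubword {A : Type*} : FreeMagma A → FreeMagma A → Prop
  | refl (w : FreeMagma A) : IsSubword w w
  | left {s u : FreeMagma A} (v : FreeMagma A) : IsSubword s u → IsSubword s (u * v)
  | right (u : FreeMagma A) {s v : FreeMagma A} : IsSubword s v → IsSubword s (u * v)

/-- `IsSprout w L`: `L` is a sprout sequence of the word `w` (with the convention that
words of length 1 have the empty sprout sequence). -/
inductive IsSprout {A : Type*} : FreeMagma A → List (FreeMagma A) → Prop
  | single (a : A) : IsSprout (FreeMagma.of a) []
  | cons_l {u v : FreeMagma A} {L : List (FreeMagma A)} :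
      wlen u ≤ wlen v → IsSprout v L → IsSprout (u * v) (u :: L)
  | cons_r {u v : FreeMagma A} {L : List (FreeMagma A)} :
      wlen v ≤ wlen u → IsSprout u L → IsSprout (u * v) (v :: L)

/-- A word is `k`-bounded if it has length 1 or admits an `l`-sprout sequence all of whose
terms are strictly less than `k`. -/
def KBounded {A : Type*} (k : ℕ) (w : FreeMagma A) : Prop :=
  ∃ L : List (FreeMagma A), IsSprout w L ∧ ∀ u ∈ L, wlen u < k

/-- A word `w` in `S` is irreducible if it does not lie in `L_m(S)` for any `m < l(w)`. -/
def Irred (F : Type*) {A : Type*} [Field F] [NonUnitalNonAssocRing A] [Module F A]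
    (S : Set A) (w : FreeMagma A) : Prop :=
  ∀ m : ℕ, m < wlen w → evalA w ∉ Lspan F S m

/-- The step function of a word: the least `t` such that `w` has a subword of
length `l(w) - 2t - 1`. -/
noncomputable def stepFn {A : Type*} (w : FreeMagma A) : ℕ :=
  sInf { t : ℕ | ∃ u : FreeMagma A, IsSubword u w ∧ wlen u + 2 * t + 1 = wlen w }

/-- `w` is a `p`-step word for the generating set `S`. -/
def IsPStepWord (F : Type*) {A : Type*} [Field F] [NonUnitalNonAssocRing A] [Module F A]
    (S : Set A) (w : FreeMagma A) (p : ℕ) : Prop :=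
  HasLeavesIn S w ∧ Irred F S w ∧ KBounded 3 w ∧ stepFn w = p ∧
    ∀ v : FreeMagma A, HasLeavesIn S v → Irred F S v → KBounded 3 v → wlen v = wlen w →
      p ≤ stepFn v

/-- `A` is `k`-round: `x · v = 0` for every product `v` of `k` elements. -/
def IsKRound (A : Type*) [NonUnitalNonAssocRing A] (k : ℕ) : Prop :=
  ∀ (x : A) (w : FreeMagma A), wlen w = k → x * evalA w = 0

/-- `A` is `k`-based. -/
def IsKBased (A : Type*) [NonUnitalNonAssocRing A] (k : ℕ) : Prop :=
  ∀ (x : A) (u v : FreeMagma A), wlen u + wlen v = k →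
    x * (evalA u * evalA v) = evalA u * (x * evalA v) ∧
      (evalA u * evalA v) * x = (evalA u * x) * evalA v

/-- The set `P(x,y,z)`. -/
def Pset {A : Type*} [Mul A] (x y z : A) : Set A :=
  {(x*z)*y, (z*x)*y, (y*z)*x, (z*y)*x, x*(z*y), x*(y*z), y*(x*z), y*(z*x),
    x*y, y*x, x*z, z*x, y*z, z*y, x, y, z}

/-- The set `Q_l(x,y,z)`. -/
def Qlset {A : Type*} [Mul A] (x y z : A) : Set A :=
  {x*(z*y), x*(y*z), y*(x*z), y*(z*x), x*y, y*x, x*z, z*x, y*z, z*y, x, y, z}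

/-- The set `Q_r(x,y,z)`. -/
def Qrset {A : Type*} [Mul A] (x y z : A) : Set A :=
  {(x*z)*y, (z*x)*y, (y*z)*x, (z*y)*x, x*y, y*x, x*z, z*x, y*z, z*y, x, y, z}

/-- `A` is a mixing algebra. -/
def IsMixingAlg (F A : Type*) [Field F] [NonUnitalNonAssocRing A] [Module F A] : Prop :=
  ∀ x y z : A, (x*y)*z ∈ Submodule.span F (Pset x y z) ∧
    z*(x*y) ∈ Submodule.span F (Pset x y z)

/-- `A` is a sliding algebra. -/
def IsSlidingAlg (F A : Type*) [Field F] [NonUnitalNonAssocRing A] [Module F A] : Prop :=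
  (∀ x y z : A, z*(x*y) ∈ Submodule.span F (Qrset x y z)) ∨
  (∀ x y z : A, (x*y)*z ∈ Submodule.span F (Qlset x y z))

/-! By induction on `n`, every word in `S` of length at most `n` lies in the span of the
irreducible `k`-bounded words of length at most `n`. For a product `u * v` of shorter words,
bilinearity and the induction hypothesis reduce to `k`-bounded factors, and these are handled
by a second induction on the length `μ` of the shorter factor. If `μ < k` the product is itself
`k`-bounded. Otherwise cut the shorter factor into `k` pieces: the product becomes the value of
a word in `z₀ · W(z₁,…,zₖ) ∪ W(z₁,…,zₖ) · z₀` (with `z₀` the longer factor), and `k`-mixing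
rewrites it through words of `D₀`. Such a word either misses a variable, hence is shorter, or
is a product one of whose factors avoids `z₀` and misses some `zⱼ`, hence has length `< μ`. -/

section Words
variable {α β : Type*}

@[simp]
theorem leafList_of (a : α) : leafList (FreeMagma.of a) = [a] := rfl

@[simp]
theorem leafList_mul (u v : FreeMagma α) : leafList (u * v) = leafList u ++ leafList v := rfl

theorem wlen_mul (u v : FreeMagma α) : wlen (u * v) = wlen u + wlen v :=
  List.length_append

theorem one_le_wlen (w : FreeMagma α) : 1 ≤ wlen w := by
  induction w with
  | ih1 a => rfl
  | ih2 u v hu _ => rw [wlen_mul]; omega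

theorem hasLeavesIn_mul {S : Set α} {u v : FreeMagma α} :
    HasLeavesIn S (u * v) ↔ HasLeavesIn S u ∧ HasLeavesIn S v := by
  simp only [HasLeavesIn, leafList_mul, List.mem_append, or_imp, forall_and]

theorem evalA_mul [Mul β] (u v : FreeMagma β) : evalA (u * v) = evalA u * evalA v :=
  map_mul _ _ _

theorem evalA_lift [Mul β] {n : ℕ} (σ : Fin n → FreeMagma β) (z : FreeMagma (Fin n)) :
    evalA (FreeMagma.lift σ z) = evalVar (fun i => evalA (σ i)) z := by
  induction z with
  | ih1 i => rfl
  | ih2 x y hx hy => simp only [map_mul, evalA_mul, hx, hy, evalVar]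

theorem leafList_lift (σ : α → FreeMagma β) (z : FreeMagma α) :
    leafList (FreeMagma.lift σ z) = (leafList z).flatMap fun i => leafList (σ i) := by
  induction z with
  | ih1 i => simp
  | ih2 x y hx hy => simp [hx, hy]

theorem lift_congr {σ τ : α → FreeMagma β} {z : FreeMagma α}
    (h : ∀ i ∈ leafList z, σ i = τ i) : FreeMagma.lift σ z = FreeMagma.lift τ z := by
  induction z with
  | ih1 i => simpa using h i
  | ih2 x y hx hy =>
    simp only [leafList_mul, List.mem_append] at h
    rw [map_mul, map_mul, hx fun i hi => h i (.inl hi), hy fun i hi => h i (.inr hi)]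

theorem hasLeavesIn_lift {S : Set β} {σ : α → FreeMagma β} (hσ : ∀ i, HasLeavesIn S (σ i))
    (z : FreeMagma α) : HasLeavesIn S (FreeMagma.lift σ z) := by
  intro a ha
  rw [leafList_lift, List.mem_flatMap] at ha
  obtain ⟨i, -, ha⟩ := ha
  exact hσ i a ha

theorem eq_of_leafList_eq_singleton {z : FreeMagma α} {a : α} (h : leafList z = [a]) :
    z = FreeMagma.of a := by
  cases z with
  | of b => rw [List.singleton_inj.mp h]
  | mul x y =>
    have h1 : wlen x + wlen y = 1 := (wlen_mul x y).symm.trans (congrArg List.length h)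
    have := one_le_wlen x
    have := one_le_wlen y
    omega

theorem kBounded_of (k : ℕ) (a : α) : KBounded k (FreeMagma.of a) :=
  ⟨[], .single a, by simp⟩

theorem KBounded.mul {k : ℕ} {u v : FreeMagma α} (hu : KBounded k u) (hv : KBounded k v)
    (h : min (wlen u) (wlen v) < k) : KBounded k (u * v) := by
  obtain ⟨L, hL, hLk⟩ := hu
  obtain ⟨M, hM, hMk⟩ := hv
  rcases le_total (wlen u) (wlen v) with huv | hvu
  · rw [min_eq_left huv] at h
    exact ⟨u :: M, .cons_l huv hM, List.forall_mem_cons.mpr ⟨h, hMk⟩⟩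
  · rw [min_eq_right hvu] at h
    exact ⟨v :: L, .cons_r hvu hL, List.forall_mem_cons.mpr ⟨h, hLk⟩⟩

end Words

section Multilinear
variable {α : Type*} {m : ℕ} {T T' T₁ T₂ : Finset (Fin m)} {U U₁ U₂ : FreeMagma (Fin m)}

theorem isMultilinearOn_of (i : Fin m) : IsMultilinearOn {i} (FreeMagma.of i) := rfl

theorem isMultilinearOn_toFinset (h : (leafList U).Nodup) :
    IsMultilinearOn (leafList U).toFinset U := by
  rw [IsMultilinearOn, List.toFinset_val, h.dedup]

theorem IsMultilinearOn.mem {i : Fin m} (hU : IsMultilinearOn T U) (hi : i ∈ leafList U) :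
    i ∈ T := by
  rw [← Finset.mem_val, ← hU]
  exact Multiset.mem_coe.mpr hi

theorem IsMultilinearOn.mul (h₁ : IsMultilinearOn T₁ U₁) (h₂ : IsMultilinearOn T₂ U₂)
    (hd : Disjoint T₁ T₂) : IsMultilinearOn (T₁ ∪ T₂) (U₁ * U₂) := by
  rw [← Finset.disjUnion_eq_union _ _ hd, IsMultilinearOn, leafList_mul, ← Multiset.coe_add,
    h₁, h₂]
  rfl

theorem IsMultilinearOn.wlen_lift (hU : IsMultilinearOn T U) (σ : Fin m → FreeMagma α) :
    wlen (FreeMagma.lift σ U) = ∑ i ∈ T, wlen (σ i) := by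
  rw [Finset.sum_eq_multiset_sum, ← hU, Multiset.map_coe, Multiset.sum_coe, wlen,
    leafList_lift, List.length_flatMap]
  rfl

theorem IsMultilinearOn.wlen_lift_lt (hU : IsMultilinearOn T U) (hT : T ⊂ T')
    (σ : Fin m → FreeMagma α) : wlen (FreeMagma.lift σ U) < ∑ i ∈ T', wlen (σ i) := by
  obtain ⟨i, hiT', hiT⟩ := Finset.exists_of_ssubset hT
  rw [hU.wlen_lift]
  exact Finset.sum_lt_sum_of_subset hT.subset hiT' hiT (one_le_wlen _) fun _ _ _ => Nat.zero_le _

theorem exists_isMultilinearOn_lift_eq (v : FreeMagma α) (hT : T.Nonempty)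
    (hcard : T.card ≤ wlen v) :
    ∃ (U : FreeMagma (Fin m)) (σ : Fin m → FreeMagma α),
      IsMultilinearOn T U ∧ FreeMagma.lift σ U = v ∧ ∀ i, leafList (σ i) ⊆ leafList v := by
  induction v generalizing T with
  | ih1 a =>
    obtain ⟨i, rfl⟩ := Finset.card_eq_one.mp (le_antisymm hcard hT.card_pos)
    exact ⟨.of i, fun _ => .of a, isMultilinearOn_of i, rfl, fun _ => List.Subset.refl _⟩
  | ih2 v₁ v₂ ih₁ ih₂ =>
    rcases hT.exists_eq_singleton_or_nontrivial with ⟨i, rfl⟩ | hT₂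
    · exact ⟨.of i, fun _ => v₁ * v₂, isMultilinearOn_of i, rfl, fun _ => List.Subset.refl _⟩
    classical
    have h₂ := Finset.one_lt_card_iff_nontrivial.mpr hT₂
    have := one_le_wlen v₁
    have := one_le_wlen v₂
    rw [wlen_mul] at hcard
    obtain ⟨T₁, hT₁, hc₁⟩ :=
      Finset.exists_subset_card_eq (show min (wlen v₁) (T.card - 1) ≤ T.card by omega)
    have hc₂ := Finset.card_sdiff_of_subset hT₁
    obtain ⟨U₁, σ₁, hU₁, hσ₁, hs₁⟩ := ih₁ (T := T₁) (Finset.card_pos.mp (by omega)) (by omega)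
    obtain ⟨U₂, σ₂, hU₂, hσ₂, hs₂⟩ := ih₂ (T := T \ T₁) (Finset.card_pos.mp (by omega)) (by omega)
    refine ⟨U₁ * U₂, T₁.piecewise σ₁ σ₂, ?_, ?_, fun i => ?_⟩
    · rw [← Finset.union_sdiff_of_subset hT₁]
      exact hU₁.mul hU₂ Finset.disjoint_sdiff
    · rw [map_mul, ← hσ₁, ← hσ₂, lift_congr fun i hi => T₁.piecewise_eq_of_mem _ _ (hU₁.mem hi),
        lift_congr fun i hi => T₁.piecewise_eq_of_notMem _ _ (Finset.mem_sdiff.mp (hU₂.mem hi)).2]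
    · by_cases hi : i ∈ T₁
      · rw [T₁.piecewise_eq_of_mem _ _ hi]
        exact List.Subset.trans (hs₁ i) (List.subset_append_left _ _)
      · rw [T₁.piecewise_eq_of_notMem _ _ hi]
        exact List.Subset.trans (hs₂ i) (List.subset_append_right _ _)

end Multilinear

section Mixing
variable {k : ℕ}

theorem exists_ssubset_or_eq_of_add_eq_univ {a b : FreeMagma (Fin (k + 1))}
    (h : (leafList a : Multiset (Fin (k + 1))) + (leafList b : Multiset (Fin (k + 1))) =
      Finset.univ.val)
    (h0 : (0 : Fin (k + 1)) ∉ leafList b) :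
    (∃ T, T ⊂ Finset.univ.erase 0 ∧ IsMultilinearOn T b) ∨
      (a = FreeMagma.of 0 ∧ IsMultilinearOn (Finset.univ.erase 0) b) := by
  have hnd : (leafList b).Nodup :=
    Multiset.coe_nodup.mp (Multiset.nodup_of_le (Multiset.le_add_left _ _) (h ▸ Finset.univ.nodup))
  have hb := isMultilinearOn_toFinset hnd
  have hsub : (leafList b).toFinset ⊆ Finset.univ.erase 0 := fun i hi =>
    Finset.mem_erase.mpr ⟨fun h => h0 (h ▸ List.mem_toFinset.mp hi), Finset.mem_univ i⟩
  by_cases heq : (leafList b).toFinset = Finset.univ.erase 0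
  · rw [heq] at hb
    refine .inr ⟨eq_of_leafList_eq_singleton (Multiset.coe_eq_singleton.mp ?_), hb⟩
    have huniv : Finset.univ.val = {0} + (Finset.univ.erase (0 : Fin (k + 1))).val := by
      rw [Multiset.singleton_add, Finset.erase_val, Multiset.cons_erase (Finset.mem_univ _)]
    rw [show (leafList b : Multiset (Fin (k + 1))) = _ from hb, huniv] at h
    exact add_right_cancel h
  · exact .inl ⟨_, Finset.ssubset_iff_subset_ne.mpr ⟨hsub, heq⟩, hb⟩

theorem InD0.exists_mul_ssubset (hk : 1 ≤ k) {z : FreeMagma (Fin (k + 1))} (hz : InD0 z)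
    (huniv : IsMultilinearOn Finset.univ z) :
    ∃ z₁ z₂ T, z = z₁ * z₂ ∧ T ⊂ Finset.univ.erase 0 ∧
      (IsMultilinearOn T z₁ ∨ IsMultilinearOn T z₂) := by
  cases z with
  | of i =>
    have : 1 = k + 1 := by simpa using congrArg Multiset.card huniv
    omega
  | mul z₁ z₂ =>
    rw [FreeMagma.mul_eq] at hz huniv ⊢
    have hsplit := (Multiset.coe_add (leafList z₁) (leafList z₂)).trans huniv
    by_cases h0 : (0 : Fin (k + 1)) ∈ leafList z₂
    · have hdisj := (Multiset.nodup_add.mp (hsplit ▸ Finset.univ.nodup)).2.2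
      have h0' : (0 : Fin (k + 1)) ∉ leafList z₁ := fun h0' =>
        Multiset.disjoint_left.mp hdisj (Multiset.mem_coe.mpr h0') (Multiset.mem_coe.mpr h0)
      rcases exists_ssubset_or_eq_of_add_eq_univ (a := z₂) ((add_comm _ _).trans hsplit) h0'
        with ⟨T, hT, h⟩ | ⟨ha, hb⟩
      · exact ⟨z₁, z₂, T, rfl, hT, .inl h⟩
      · exact absurd ⟨z₁, hb, .inr (ha ▸ rfl)⟩ hz.2
    · rcases exists_ssubset_or_eq_of_add_eq_univ hsplit h0 with ⟨T, hT, h⟩ | ⟨ha, hb⟩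
      · exact ⟨z₁, z₂, T, rfl, hT, .inr h⟩
      · exact absurd ⟨z₂, hb, .inl (ha ▸ rfl)⟩ hz.2

theorem IsKMixing.evalVar_mem_span {F A : Type*} [Field F] [NonUnitalNonAssocRing A]
    [Module F A] (hmix : IsKMixing F A k) (f : Fin (k + 1) → A) {U w : FreeMagma (Fin (k + 1))}
    (hU : IsMultilinearOn (Finset.univ.erase 0) U)
    (hw : w = FreeMagma.of 0 * U ∨ w = U * FreeMagma.of 0) :
    evalVar f w ∈ Submodule.span F {a | ∃ z, InD0 z ∧ evalVar f z = a} := by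
  simpa only [Fin.cons_self_tail] using hmix (f 0) (Fin.tail f) w ⟨U, hU, hw⟩

end Mixing

section BoundedSpan
variable {F A : Type*} [Field F] [NonUnitalNonAssocRing A] [Module F A] {k : ℕ} {S : Set A}
  {m n μ : ℕ}

theorem mul_mem_of_mem_span [SMulCommClass F A A] [IsScalarTower F A A] {s t : Set A}
    {P : Submodule F A} {a b : A} (ha : a ∈ Submodule.span F s) (hb : b ∈ Submodule.span F t)
    (h : ∀ x ∈ s, ∀ y ∈ t, x * y ∈ P) : a * b ∈ P := by
  have hab := Submodule.apply_mem_map₂ (LinearMap.mul F A) ha hb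
  rw [Submodule.map₂_span_span] at hab
  exact Submodule.span_le.mpr (Set.image2_subset_iff.mpr h) hab

variable (F k S) in
def boundedSpan (n : ℕ) : Submodule F A :=
  Submodule.span F
    {a | ∃ v, HasLeavesIn S v ∧ Irred F S v ∧ KBounded k v ∧ wlen v ≤ n ∧ evalA v = a}

theorem boundedSpan_mono : Monotone (boundedSpan F k S) := fun _ _ hmn =>
  Submodule.span_mono fun _ ⟨v, hS, hI, hB, hv, he⟩ => ⟨v, hS, hI, hB, hv.trans hmn, he⟩

variable (F k S) in
def SpannedBelow (n : ℕ) : Prop :=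
  ∀ w, HasLeavesIn S w → wlen w < n → evalA w ∈ boundedSpan F k S (wlen w)

theorem SpannedBelow.mem (ih : SpannedBelow F k S n) {w : FreeMagma A} (hw : HasLeavesIn S w)
    (hlt : wlen w < n) (hle : wlen w ≤ m) : evalA w ∈ boundedSpan F k S m :=
  boundedSpan_mono hle (ih w hw hlt)

theorem SpannedBelow.lspan_le (ih : SpannedBelow F k S n) (hm : m < n) :
    Lspan F S m ≤ boundedSpan F k S m :=
  Submodule.span_le.mpr fun _ ⟨_, hw, hle, he⟩ => he ▸ ih.mem hw (by omega) hle

theorem SpannedBelow.mem_of_kBounded (ih : SpannedBelow F k S n) {w : FreeMagma A}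
    (hw : HasLeavesIn S w) (hb : KBounded k w) (hn : wlen w ≤ n) :
    evalA w ∈ boundedSpan F k S n := by
  by_cases hirr : Irred F S w
  · exact Submodule.subset_span ⟨w, hw, hirr, hb, hn, rfl⟩
  · obtain ⟨m, hm, hmem⟩ : ∃ m < wlen w, evalA w ∈ Lspan F S m := by simpa [Irred] using hirr
    exact boundedSpan_mono (by omega) (ih.lspan_le (by omega) hmem)

theorem SpannedBelow.evalA_lift_mem_of_inD0 (hk : 1 ≤ k) (ih : SpannedBelow F k S n)
    (ihμ : ∀ u v, HasLeavesIn S u → HasLeavesIn S v → wlen u + wlen v ≤ n →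
      min (wlen u) (wlen v) < μ → evalA u * evalA v ∈ boundedSpan F k S n)
    {σ : Fin (k + 1) → FreeMagma A} (hσ : ∀ i, HasLeavesIn S (σ i))
    (hμ : ∑ i ∈ Finset.univ.erase 0, wlen (σ i) ≤ μ) (hn : ∑ i, wlen (σ i) ≤ n)
    {z : FreeMagma (Fin (k + 1))} (hz : InD0 z) :
    evalA (FreeMagma.lift σ z) ∈ boundedSpan F k S n := by
  have hzT := isMultilinearOn_toFinset (Multiset.coe_nodup.mp hz.1)
  by_cases huniv : (leafList z).toFinset = Finset.univ
  · rw [huniv] at hzT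
    obtain ⟨z₁, z₂, T, rfl, hT, h⟩ := hz.exists_mul_ssubset hk hzT
    have hsum : wlen (FreeMagma.lift σ z₁) + wlen (FreeMagma.lift σ z₂) ≤ n := by
      rw [← wlen_mul, ← map_mul, hzT.wlen_lift]; exact hn
    rw [map_mul, evalA_mul]
    refine ihμ _ _ (hasLeavesIn_lift hσ _) (hasLeavesIn_lift hσ _) hsum ?_
    rcases h with h | h
    · exact (min_le_left _ _).trans_lt ((h.wlen_lift_lt hT σ).trans_le hμ)
    · exact (min_le_right _ _).trans_lt ((h.wlen_lift_lt hT σ).trans_le hμ)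
  · have hlt := hzT.wlen_lift_lt (Finset.ssubset_univ_iff.mpr huniv) σ
    exact ih.mem (hasLeavesIn_lift hσ _) (by omega) (by omega)

theorem SpannedBelow.mul_mem_of_le (hk : 1 ≤ k) (hmix : IsKMixing F A k)
    (ih : SpannedBelow F k S n)
    (ihμ : ∀ u v, HasLeavesIn S u → HasLeavesIn S v → wlen u + wlen v ≤ n →
      min (wlen u) (wlen v) < μ → evalA u * evalA v ∈ boundedSpan F k S n)
    {s x : FreeMagma A} (hs : HasLeavesIn S s) (hx : HasLeavesIn S x) (hks : k ≤ wlen s)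
    (hsμ : wlen s ≤ μ) (hn : wlen s + wlen x ≤ n) :
    evalA s * evalA x ∈ boundedSpan F k S n ∧ evalA x * evalA s ∈ boundedSpan F k S n := by
  have hcard : (Finset.univ.erase (0 : Fin (k + 1))).card = k := by simp
  obtain ⟨U, σ, hU, hσs, hσ⟩ :=
    exists_isMultilinearOn_lift_eq s (T := Finset.univ.erase 0) (Finset.card_pos.mp (by omega))
      (by omega)
  set σ' := Function.update σ 0 x
  have h0 : FreeMagma.lift σ' (.of 0) = x := by simp [σ']
  have hU' : FreeMagma.lift σ' U = s :=
    hσs ▸ lift_congr fun i hi => Function.update_of_ne (Finset.ne_of_mem_erase (hU.mem hi)) _ _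
  have hσ'S : ∀ i, HasLeavesIn S (σ' i) := by
    intro i
    rcases eq_or_ne i 0 with rfl | hi
    · simpa [σ'] using hx
    · rw [show σ' i = σ i from Function.update_of_ne hi _ _]
      exact fun a ha => hs a (hσ i ha)
  have hsum : ∑ i, wlen (σ' i) = wlen x + wlen s := by
    rw [← Finset.add_sum_erase _ _ (Finset.mem_univ 0), ← hU.wlen_lift, hU']
    simp [σ']
  have key : ∀ w, (w = .of 0 * U ∨ w = U * .of 0) →
      evalA (FreeMagma.lift σ' w) ∈ boundedSpan F k S n := by
    intro w hw
    rw [evalA_lift]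
    refine Submodule.span_le.mpr ?_ (hmix.evalVar_mem_span _ hU hw)
    rintro _ ⟨z, hz, rfl⟩
    rw [← evalA_lift]
    exact ih.evalA_lift_mem_of_inD0 hk ihμ hσ'S (by rw [← hU.wlen_lift, hU']; exact hsμ)
      (by omega) hz
  constructor
  · simpa only [map_mul, evalA_mul, hU', h0] using key _ (.inr rfl)
  · simpa only [map_mul, evalA_mul, hU', h0] using key _ (.inl rfl)

end BoundedSpan

section Reduction
variable {F A : Type*} [Field F] [NonUnitalNonAssocRing A] [Module F A]
  [SMulCommClass F A A] [IsScalarTower F A A] {k : ℕ} {S : Set A} {n : ℕ}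

theorem SpannedBelow.mul_mem (hk : 1 ≤ k) (hmix : IsKMixing F A k) (ih : SpannedBelow F k S n)
    {u v : FreeMagma A} (hu : HasLeavesIn S u) (hv : HasLeavesIn S v)
    (huv : wlen u + wlen v ≤ n) : evalA u * evalA v ∈ boundedSpan F k S n := by
  suffices ∀ μ u v, HasLeavesIn S u → HasLeavesIn S v → wlen u + wlen v ≤ n →
      min (wlen u) (wlen v) < μ → evalA u * evalA v ∈ boundedSpan F k S n from
    this _ u v hu hv huv (Nat.lt_succ_self _)
  intro μ
  induction μ with
  | zero => intro _ _ _ _ _ h; omega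
  | succ μ ihμ =>
    intro u v hu hv huv hμ
    have := one_le_wlen u
    have := one_le_wlen v
    refine mul_mem_of_mem_span (ih u hu (by omega)) (ih v hv (by omega)) ?_
    rintro _ ⟨q₁, hq₁, -, hb₁, hl₁, rfl⟩ _ ⟨q₂, hq₂, -, hb₂, hl₂, rfl⟩
    by_cases hsmall : min (wlen q₁) (wlen q₂) < k
    · exact ih.mem_of_kBounded (hasLeavesIn_mul.mpr ⟨hq₁, hq₂⟩) (hb₁.mul hb₂ hsmall)
        (by rw [wlen_mul]; omega)
    · rcases le_total (wlen q₁) (wlen q₂) with h | h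
      · exact (ih.mul_mem_of_le hk hmix ihμ hq₁ hq₂ (by omega) (by omega) (by omega)).1
      · exact (ih.mul_mem_of_le hk hmix ihμ hq₂ hq₁ (by omega) (by omega) (by omega)).2

theorem spannedBelow (hk : 1 ≤ k) (hmix : IsKMixing F A k) (n : ℕ) : SpannedBelow F k S n := by
  induction n with
  | zero => intro _ _ h; omega
  | succ n ih =>
    intro w hw hlt
    have ih' : SpannedBelow F k S (wlen w) := fun v hv h => ih v hv (by omega)
    cases w with
    | of a => exact ih'.mem_of_kBounded hw (kBounded_of k a) le_rfl
    | mul u v =>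
      rw [FreeMagma.mul_eq, hasLeavesIn_mul] at hw
      rw [FreeMagma.mul_eq, evalA_mul]
      exact ih'.mul_mem hk hmix hw.1 hw.2 (wlen_mul u v).ge

end Reduction

section Statement
variable {F A : Type*} [Field F] [NonUnitalNonAssocRing A] [Module F A]
  [SMulCommClass F A A] [IsScalarTower F A A]

theorem stmt15_general (k : ℕ) (hk : 2 ≤ k) (hmix : IsKMixing F A k)
    (S : Set A)
    (w : FreeMagma A) (hw : HasLeavesIn S w) :
    ∃ (n : ℕ) (ws : Fin n → FreeMagma A),
      (∀ i, HasLeavesIn S (ws i) ∧ Irred F S (ws i) ∧ KBounded k (ws i) ∧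
        wlen (ws i) ≤ wlen w) ∧
      evalA w ∈ Submodule.span F (Set.range fun i => evalA (ws i)) := by
  obtain ⟨n, c, g, hg⟩ :=
    Submodule.mem_span_set'.mp (spannedBelow (by omega) hmix _ w hw (Nat.lt_succ_self _))
  choose ws hS hI hB hl he using fun i => (g i).2
  refine ⟨n, ws, fun i => ⟨hS i, hI i, hB i, hl i⟩, hg ▸ ?_⟩
  exact Submodule.sum_mem _ fun i _ =>
    Submodule.smul_mem _ _ (Submodule.subset_span ⟨i, he i⟩)

theorem stmt15 (k : ℕ) (hk : 2 ≤ k) (hmix : IsKMixing F A k)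
    (S : Set A) (hS : Generates F S)
    (w : FreeMagma A) (hw : HasLeavesIn S w) (hirr : Irred F S w) (hlen : 2 ≤ wlen w) :
    ∃ (n : ℕ) (ws : Fin n → FreeMagma A),
      (∀ i, HasLeavesIn S (ws i) ∧ Irred F S (ws i) ∧ KBounded k (ws i) ∧
        wlen (ws i) ≤ wlen w) ∧
      evalA w ∈ Submodule.span F (Set.range fun i => evalA (ws i)) :=
  stmt15_general k hk hmix S w hw

end Statement

end P
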